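/- Let A, B with 0 < A ≤ B. For a scaling parameter B̂ > 0 let A₁(B̂) = min{ s(φ₂ᵗ(s))² : s ∈ [A/B̂, B/B̂] } and B₁(B̂) = max{ s(φ₂ᵗ(s))² : s ∈ [A/B̂, B/B̂] }, where φ₂ᵗ(s) = 3/2 − s/2. Then the ratio A₁(B̂)/B₁(B̂) is maximized at B̂ = (A + √(AB) + B)/3. -/

import Mathlib

/-- Frame-bound ratio after one step of tight iteration II with initial scaling by `B̂`. -/
noncomputable def ratio8 (A B Bhat : ℝ) : ℝ :=
  sInf ((fun s : ℝ => s * ((3/2) - s/2) ^ 2) '' Set.Icc (A / Bhat) (B / Bhat)) /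
  sSup ((fun s : ℝ => s * ((3/2) - s/2) ^ 2) '' Set.Icc (A / Bhat) (B / Bhat))

private noncomputable def phi8 (s : ℝ) : ℝ := s * ((3/2) - s/2) ^ 2

private lemma ratio8_eq (A B C : ℝ) :
    ratio8 A B C = sInf (phi8 '' Set.Icc (A/C) (B/C)) / sSup (phi8 '' Set.Icc (A/C) (B/C)) := rfl

private lemma phi8_cont : Continuous phi8 := by unfold phi8; fun_prop

private lemma phi8_nonneg {s : ℝ} (h : 0 ≤ s) : 0 ≤ phi8 s := by
  unfold phi8; positivity

private lemma phi8_le_one {s : ℝ} (h : s ≤ 4) : phi8 s ≤ 1 := by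
  unfold phi8
  nlinarith [mul_nonneg (sq_nonneg (s-1)) (show (0:ℝ) ≤ 4 - s by linarith)]

private lemma phi8_mono {s t : ℝ} (h0 : 0 ≤ s) (hst : s ≤ t) (ht : t ≤ 1) :
    phi8 s ≤ phi8 t := by
  unfold phi8
  have h1 : (1:ℝ) ≤ 3 - s - t := by linarith
  have h2 : s * t ≤ 1 := by nlinarith
  have h3 : 0 ≤ (3-s-t)^2 - s*t := by nlinarith
  nlinarith [mul_nonneg (sub_nonneg.2 hst) h3]

private lemma phi8_anti {s t : ℝ} (h1 : 1 ≤ s) (hst : s ≤ t) (ht : t ≤ 3) :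
    phi8 t ≤ phi8 s := by
  unfold phi8
  have h3 : 0 ≤ s*t - (3-s-t)^2 := by
    nlinarith [mul_nonneg (show (0:ℝ) ≤ s-1 by linarith) (show (0:ℝ) ≤ 3-s by linarith),
      mul_nonneg (show (0:ℝ) ≤ t-1 by linarith) (show (0:ℝ) ≤ 3-t by linarith),
      mul_nonneg (show (0:ℝ) ≤ s-1 by linarith) (show (0:ℝ) ≤ 3-t by linarith),
      mul_nonneg (show (0:ℝ) ≤ t-s by linarith) (show (0:ℝ) ≤ 3-t by linarith)]
  nlinarith [mul_nonneg (sub_nonneg.2 hst) h3]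

private lemma key_h8 (x : ℝ) (hx0 : 0 ≤ x) (hx1 : x ≤ 1) :
    (3 - x^2)^2 * (1+x+x^2)^3 ≤ 27*(1+x)^2 := by
  have hfac : 27*(1+x)^2 - (3-x^2)^2*(1+x+x^2)^3
      = (1-x)^2 * (18+63*x+87*x^2+66*x^3+26*x^4-2*x^5-9*x^6-5*x^7-x^8) := by ring
  have h5 : x^5 ≤ 1 := pow_le_one₀ hx0 hx1
  have h6 : x^6 ≤ 1 := pow_le_one₀ hx0 hx1
  have h7 : x^7 ≤ 1 := pow_le_one₀ hx0 hx1
  have h8 : x^8 ≤ 1 := pow_le_one₀ hx0 hx1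
  have hin : 0 ≤ 18+63*x+87*x^2+66*x^3+26*x^4-2*x^5-9*x^6-5*x^7-x^8 := by
    nlinarith [pow_nonneg hx0 2, pow_nonneg hx0 3, pow_nonneg hx0 4]
  nlinarith [mul_nonneg (sq_nonneg (1-x)) hin]

private lemma key_q48 (x : ℝ) (hx0 : 0 ≤ x) (hx1 : x ≤ 1) :
    4*x^4*(1+x+x^2)^3 ≤ 27*(1+x)^2 := by
  have hfac : 27*(1+x)^2 - 4*x^4*(1+x+x^2)^3
      = (1-x)*(27+81*x+108*x^2+108*x^3+104*x^4+92*x^5+68*x^6+40*x^7+16*x^8+4*x^9) := by ring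
  have hin : 0 ≤ 27+81*x+108*x^2+108*x^3+104*x^4+92*x^5+68*x^6+40*x^7+16*x^8+4*x^9 := by positivity
  nlinarith [mul_nonneg (show (0:ℝ) ≤ 1-x by linarith) hin]

private lemma key_h28 (x : ℝ) (hx0 : 0 ≤ x) (hx1 : x ≤ 1) (h13 : 1 ≤ 3*x^2) :
    (3*x^2-1)^2*(1+x+x^2)^3 ≤ 27*x^8*(1+x)^2 := by
  have hfac : 27*x^8*(1+x)^2 - (3*x^2-1)^2*(1+x+x^2)^3
      = (1-x)^2*(-1-5*x-9*x^2-2*x^3+26*x^4+66*x^5+87*x^6+63*x^7+18*x^8) := by ring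
  have hu : (0:ℝ) ≤ 3*x^2 - 1 := by linarith
  have hin : 0 ≤ -1-5*x-9*x^2-2*x^3+26*x^4+66*x^5+87*x^6+63*x^7+18*x^8 := by
    nlinarith [mul_nonneg hu (pow_nonneg hx0 1), mul_nonneg hu (pow_nonneg hx0 2),
      mul_nonneg hu (pow_nonneg hx0 3), mul_nonneg hu (pow_nonneg hx0 4),
      mul_nonneg hu (pow_nonneg hx0 5), mul_nonneg hu (pow_nonneg hx0 6), hu,
      pow_nonneg hx0 5, pow_nonneg hx0 6, pow_nonneg hx0 7, pow_nonneg hx0 8]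
  nlinarith [mul_nonneg (sq_nonneg (1-x)) hin]

private lemma polyII8 (x d : ℝ) (hx0 : 0 ≤ x) (hx1 : x ≤ 1) (hd0 : 0 ≤ d) (hd1 : d ≤ 1) :
    4*(3-x^2*d)^2*(1+x+x^2)^3 ≤ 27*(1+x)^2*(3-d)^2 := by
  have hx2 : x^2 ≤ 1 := by nlinarith
  have h1 : (0:ℝ) ≤ 3 - x^2*d := by nlinarith
  have h5 : 2*(3-x^2*d) ≤ (3-d)*(3-x^2) := by
    nlinarith [mul_nonneg (show (0:ℝ) ≤ 1-x^2 by linarith) (show (0:ℝ) ≤ 1-d by linarith)]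
  have h4 : 4*(3-x^2*d)^2 ≤ (3-d)^2*(3-x^2)^2 := by
    nlinarith [mul_self_le_mul_self (by linarith : (0:ℝ) ≤ 2*(3-x^2*d)) h5]
  have h6 := key_h8 x hx0 hx1
  nlinarith [mul_le_mul_of_nonneg_right h4 (show (0:ℝ) ≤ (1+x+x^2)^3 by positivity),
    mul_le_mul_of_nonneg_left h6 (sq_nonneg (3-d))]

private lemma polyIV8 (x d : ℝ) (hx0 : 0 ≤ x) (hx1 : x ≤ 1) (h3 : 3 ≤ x^2*d) (hd0 : 0 ≤ d) :
    4*(3-x^2*d)^2*(1+x+x^2)^3 ≤ 27*(1+x)^2*(3-d)^2 := by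
  have hx2 : x^2 ≤ 1 := by nlinarith
  have hd3 : 3 ≤ d := by nlinarith [mul_le_of_le_one_left hd0 hx2]
  have h1 : (0:ℝ) ≤ x^2*d - 3 := by linarith
  have h2 : x^2*d - 3 ≤ x^2*(d-3) := by nlinarith
  have h4 : (3-x^2*d)^2 ≤ x^4*(d-3)^2 := by
    nlinarith [mul_self_le_mul_self h1 h2]
  have h6 := key_q48 x hx0 hx1
  nlinarith [mul_le_mul_of_nonneg_right h4 (show (0:ℝ) ≤ 4*(1+x+x^2)^3 by positivity),
    mul_le_mul_of_nonneg_left h6 (sq_nonneg (d-3))]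

private lemma polyIII8 (x d : ℝ) (hx0 : 0 < x) (hx1 : x ≤ 1) (h1 : 1 ≤ x^2*d) (hd3 : d ≤ 3) :
    4*(3-d)^2*(1+x+x^2)^3 ≤ 27*x^4*(1+x)^2*(3-x^2*d)^2 := by
  have hx2 : x^2 ≤ 1 := by nlinarith
  have hd0 : 0 < d := by nlinarith [mul_pos hx0 hx0]
  have h13 : 1 ≤ 3*x^2 := by nlinarith
  have hY0 : (0:ℝ) ≤ 3 - x^2*d := by nlinarith
  have he0 : (0:ℝ) ≤ 3 - d := by linarith
  have hstep : 2*x^2*(3-d) ≤ (3*x^2-1)*(3-x^2*d) := by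
    nlinarith [mul_nonneg (show (0:ℝ) ≤ 1-x^2 by linarith) (show (0:ℝ) ≤ x^2*d-1 by linarith)]
  have hsq : 4*x^4*(3-d)^2 ≤ (3*x^2-1)^2*(3-x^2*d)^2 := by
    nlinarith [mul_self_le_mul_self (show (0:ℝ) ≤ 2*x^2*(3-d) by positivity) hstep]
  have h6 := key_h28 x hx0.le hx1 h13
  have hchain : 4*x^4*(3-d)^2*(1+x+x^2)^3 ≤ 27*x^8*(1+x)^2*(3-x^2*d)^2 := by
    nlinarith [mul_le_mul_of_nonneg_right hsq (show (0:ℝ) ≤ (1+x+x^2)^3 by positivity),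
      mul_le_mul_of_nonneg_left h6 (sq_nonneg (3-x^2*d))]
  have hx4 : (0:ℝ) < x^4 := by positivity
  rw [← mul_le_mul_iff_of_pos_right hx4]
  nlinarith [hchain]

private lemma caseII_ineq8 (x d : ℝ) (hx0 : 0 < x) (hx1 : x ≤ 1) (hd0 : 0 < d)
    (hcase : d ≤ 1 ∨ 3 ≤ x^2*d) :
    phi8 (x^2*d) ≤ 27*x^2*(1+x)^2/(4*(1+x+x^2)^3) * phi8 d := by
  have hpoly : 4*(3-x^2*d)^2*(1+x+x^2)^3 ≤ 27*(1+x)^2*(3-d)^2 := by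
    rcases hcase with h | h
    · exact polyII8 x d hx0.le hx1 hd0.le h
    · exact polyIV8 x d hx0.le hx1 h hd0.le
  unfold phi8
  rw [div_mul_eq_mul_div, le_div_iff₀ (by positivity)]
  nlinarith [mul_le_mul_of_nonneg_left hpoly (show (0:ℝ) ≤ x^2*d/4 by positivity)]

private lemma caseIII_ineq8 (x d : ℝ) (hx0 : 0 < x) (hx1 : x ≤ 1) (h1 : 1 ≤ x^2*d)
    (hd3 : d ≤ 3) :
    phi8 d ≤ 27*x^2*(1+x)^2/(4*(1+x+x^2)^3) * phi8 (x^2*d) := by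
  have hpoly := polyIII8 x d hx0 hx1 h1 hd3
  have hd0 : 0 < d := by nlinarith [mul_pos hx0 hx0, sq_nonneg x]
  unfold phi8
  rw [div_mul_eq_mul_div, le_div_iff₀ (by positivity)]
  nlinarith [mul_le_mul_of_nonneg_left hpoly (show (0:ℝ) ≤ d/4 by positivity)]

private lemma opt_min8 (x s : ℝ) (hx0 : 0 < x) (hx1 : x ≤ 1)
    (h1 : 3*x^2/(1+x+x^2) ≤ s) (h2 : s ≤ 3/(1+x+x^2)) :
    27*x^2*(1+x)^2/(4*(1+x+x^2)^3) ≤ phi8 s := by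
  have hT : (0:ℝ) < 1+x+x^2 := by positivity
  have hTs1 : 3*x^2 ≤ (1+x+x^2)*s := by rw [div_le_iff₀ hT] at h1; linarith
  have hTs2 : (1+x+x^2)*s ≤ 3 := by rw [le_div_iff₀ hT] at h2; linarith
  have hTs3 : (1+x+x^2)*s ≤ 3*(1+x)^2 := by nlinarith [sq_nonneg x]
  have key : phi8 s * (4*(1+x+x^2)^3) - 27*x^2*(1+x)^2
      = ((1+x+x^2)*s-3*x^2)*(((1+x+x^2)*s-3)*((1+x+x^2)*s-3*(1+x)^2)) := by
    unfold phi8; ring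
  rw [div_le_iff₀ (by positivity)]
  have hprod : 0 ≤ ((1+x+x^2)*s-3)*((1+x+x^2)*s-3*(1+x)^2) := by
    have := mul_nonneg (show (0:ℝ) ≤ 3 - (1+x+x^2)*s by linarith)
      (show (0:ℝ) ≤ 3*(1+x)^2 - (1+x+x^2)*s by linarith)
    nlinarith [this]
  nlinarith [mul_nonneg (show (0:ℝ) ≤ (1+x+x^2)*s-3*x^2 by linarith) hprod]

private lemma div_bound8 {p q u v r : ℝ} (hp0 : 0 < p) (hu : u ∈ Set.Icc p q)
    (hv : v ∈ Set.Icc p q) (hv0 : 0 < phi8 v) (huv : phi8 u ≤ r * phi8 v) :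
    sInf (phi8 '' Set.Icc p q) / sSup (phi8 '' Set.Icc p q) ≤ r := by
  have hne : (phi8 '' Set.Icc p q).Nonempty := ⟨phi8 u, Set.mem_image_of_mem _ hu⟩
  have hbA : BddAbove (phi8 '' Set.Icc p q) := (isCompact_Icc.image phi8_cont).bddAbove
  have hbB : BddBelow (phi8 '' Set.Icc p q) := (isCompact_Icc.image phi8_cont).bddBelow
  have h0 : ∀ y ∈ phi8 '' Set.Icc p q, 0 ≤ y := by
    rintro y ⟨s, hs, rfl⟩
    exact phi8_nonneg (le_trans hp0.le hs.1)
  have hm0 : 0 ≤ sInf (phi8 '' Set.Icc p q) := le_csInf hne h0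
  have hmu : sInf (phi8 '' Set.Icc p q) ≤ phi8 u := csInf_le hbB (Set.mem_image_of_mem _ hu)
  have hMv : phi8 v ≤ sSup (phi8 '' Set.Icc p q) := le_csSup hbA (Set.mem_image_of_mem _ hv)
  calc sInf (phi8 '' Set.Icc p q) / sSup (phi8 '' Set.Icc p q)
      ≤ phi8 u / phi8 v := div_le_div₀ (le_trans hm0 hmu) hmu hv0 hMv
    _ ≤ r := by rw [div_le_iff₀ hv0]; linarith

set_option maxHeartbeats 2000000 in
/-- The optimal initial scaling constant for tight iteration II is
`B̂ = (A + √(AB) + B)/3`. -/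
theorem stmt8 (A B : ℝ) (hA : 0 < A) (hAB : A ≤ B) :
    ∀ Bhat : ℝ, 0 < Bhat →
      ratio8 A B Bhat ≤ ratio8 A B ((A + Real.sqrt (A * B) + B) / 3) := by
  intro Bhat hBhat
  have hB : 0 < B := lt_of_lt_of_le hA hAB
  set w : ℝ := Real.sqrt (A * B) with hwdef
  have hw2 : w^2 = A*B := Real.sq_sqrt (by positivity)
  have hw0 : 0 < w := Real.sqrt_pos.mpr (by positivity)
  have hwB : w ≤ B := by nlinarith
  have hAw : A ≤ w := by nlinarith
  obtain ⟨x, hxdef⟩ : ∃ x : ℝ, w / B = x := ⟨_, rfl⟩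
  have hx0 : 0 < x := hxdef ▸ div_pos hw0 hB
  have hx1 : x ≤ 1 := hxdef ▸ (div_le_one hB).2 hwB
  have hxB : x * B = w := by rw [← hxdef]; exact div_mul_cancel₀ w hB.ne'
  have hA_eq : x^2 * B = A := by
    apply mul_right_cancel₀ hB.ne'
    linear_combination (x*B + w) * hxB + hw2
  obtain ⟨d, hddef⟩ : ∃ d : ℝ, B / Bhat = d := ⟨_, rfl⟩
  have hd0 : 0 < d := hddef ▸ div_pos hB hBhat
  have hT : (0:ℝ) < 1+x+x^2 := by positivity
  have hS : A + w + B = B * (1+x+x^2) := by linear_combination -hxB - hA_eq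
  have hBstar : (0:ℝ) < (A + w + B)/3 := by positivity
  have hastar : A / ((A + w + B)/3) = 3*x^2/(1+x+x^2) := by
    rw [hS, ← hA_eq]
    field_simp
  have hbstar : B / ((A + w + B)/3) = 3/(1+x+x^2) := by
    rw [hS]
    field_simp
  have ha_eq : A / Bhat = x^2 * d := by
    rw [← hA_eq, ← hddef]; ring
  have hb_eq : B / Bhat = d := hddef
  set V : ℝ := 27*x^2*(1+x)^2/(4*(1+x+x^2)^3) with hVdef
  have hV0 : 0 ≤ V := by positivity
  -- astar bounds
  have hastar1 : 3*x^2/(1+x+x^2) ≤ 1 := by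
    rw [div_le_one hT]
    nlinarith [mul_nonneg hx0.le (sub_nonneg.2 hx1)]
  have hbstar1 : 1 ≤ 3/(1+x+x^2) := by
    rw [le_div_iff₀ hT]
    nlinarith
  have hbstar3 : 3/(1+x+x^2) ≤ 3 := by
    rw [div_le_iff₀ hT]; nlinarith
  have hastar0 : 0 < 3*x^2/(1+x+x^2) := by positivity
  have hstar_le : 3*x^2/(1+x+x^2) ≤ 3/(1+x+x^2) := by
    apply (div_le_div_iff_of_pos_right hT).mpr
    nlinarith
  -- value of phi8 at astar and bstar
  have hphia : phi8 (3*x^2/(1+x+x^2)) = V := by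
    unfold phi8; rw [hVdef]; field_simp; ring
  have hphib : phi8 (3/(1+x+x^2)) = V := by
    unfold phi8; rw [hVdef]; field_simp; ring
  -- RHS equals V
  have hRHS : ratio8 A B ((A + w + B)/3) = V := by
    rw [ratio8_eq, hastar, hbstar]
    have hmemIcc : ∀ {s : ℝ}, s ∈ Set.Icc (3*x^2/(1+x+x^2)) (3/(1+x+x^2)) → s ≤ 4 := by
      intro s hs; linarith [hs.2]
    have hne : (phi8 '' Set.Icc (3*x^2/(1+x+x^2)) (3/(1+x+x^2))).Nonempty :=
      ⟨phi8 (3*x^2/(1+x+x^2)), Set.mem_image_of_mem _ (Set.left_mem_Icc.2 (by linarith))⟩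
    have hbA : BddAbove (phi8 '' Set.Icc (3*x^2/(1+x+x^2)) (3/(1+x+x^2))) :=
      (isCompact_Icc.image phi8_cont).bddAbove
    have hbB : BddBelow (phi8 '' Set.Icc (3*x^2/(1+x+x^2)) (3/(1+x+x^2))) :=
      (isCompact_Icc.image phi8_cont).bddBelow
    have hsup : sSup (phi8 '' Set.Icc (3*x^2/(1+x+x^2)) (3/(1+x+x^2))) = 1 := by
      apply le_antisymm
      · apply csSup_le hne
        rintro y ⟨s, hs, rfl⟩
        exact phi8_le_one (hmemIcc hs)
      · have h1mem : (1:ℝ) ∈ Set.Icc (3*x^2/(1+x+x^2)) (3/(1+x+x^2)) := ⟨hastar1, hbstar1⟩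
        have : phi8 1 = 1 := by unfold phi8; norm_num
        calc (1:ℝ) = phi8 1 := this.symm
          _ ≤ _ := le_csSup hbA (Set.mem_image_of_mem _ h1mem)
    have hinf : sInf (phi8 '' Set.Icc (3*x^2/(1+x+x^2)) (3/(1+x+x^2))) = V := by
      apply le_antisymm
      · calc sInf (phi8 '' Set.Icc (3*x^2/(1+x+x^2)) (3/(1+x+x^2)))
            ≤ phi8 (3*x^2/(1+x+x^2)) :=
              csInf_le hbB (Set.mem_image_of_mem _ (Set.left_mem_Icc.2 (by linarith)))
          _ = V := hphia
      · apply le_csInf hne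
        rintro y ⟨s, hs, rfl⟩
        exact opt_min8 x s hx0 hx1 hs.1 hs.2
    rw [hsup, hinf, div_one]
  rw [hRHS, ratio8_eq]
  -- LHS analysis
  have hab' : A / Bhat ≤ B / Bhat := (div_le_div_iff_of_pos_right hBhat).mpr hAB
  have hab : x^2*d ≤ d := by rw [← ha_eq, ← hb_eq]; exact hab'
  rw [ha_eq, hb_eq]
  by_cases hb3 : 3 ≤ d
  · by_cases ha3 : x^2*d ≤ 3
    · -- 3 in interval : inf is 0
      have hmem3 : (3:ℝ) ∈ Set.Icc (x^2*d) d := ⟨ha3, hb3⟩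
      have hne : (phi8 '' Set.Icc (x^2*d) d).Nonempty :=
        ⟨phi8 3, Set.mem_image_of_mem _ hmem3⟩
      have hbB : BddBelow (phi8 '' Set.Icc (x^2*d) d) :=
        (isCompact_Icc.image phi8_cont).bddBelow
      have h30 : phi8 3 = 0 := by unfold phi8; norm_num
      have hle : sInf (phi8 '' Set.Icc (x^2*d) d) ≤ 0 := by
        rw [← h30]; exact csInf_le hbB (Set.mem_image_of_mem _ hmem3)
      have hge : 0 ≤ sInf (phi8 '' Set.Icc (x^2*d) d) := by
        apply le_csInf hne
        rintro y ⟨s, hs, rfl⟩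
        have : 0 < x^2*d := by positivity
        exact phi8_nonneg (by linarith [hs.1])
      rw [le_antisymm hle hge, zero_div]
      exact hV0
    · -- a > 3 : case IV
      push_neg at ha3
      apply div_bound8 (by positivity) (Set.left_mem_Icc.2 hab) (Set.right_mem_Icc.2 hab)
      · unfold phi8
        have hd3' : (3:ℝ) < d := by nlinarith
        have h : (0:ℝ) < d/2 - 3/2 := by linarith
        nlinarith [mul_pos hd0 (pow_pos h 2)]
      · exact caseII_ineq8 x d hx0 hx1 hd0 (Or.inr ha3.le)
  · push_neg at hb3
    by_cases hb1 : d ≤ 1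
    · -- b ≤ 1 : case II
      apply div_bound8 (by positivity) (Set.left_mem_Icc.2 hab) (Set.right_mem_Icc.2 hab)
      · unfold phi8
        have : (0:ℝ) < 3/2 - d/2 := by linarith
        positivity
      · exact caseII_ineq8 x d hx0 hx1 hd0 (Or.inl hb1)
    · push_neg at hb1
      by_cases ha1 : x^2*d ≤ 1
      · -- a ≤ 1 ≤ b < 3 : compare with optimum via monotonicity
        have h1mem : (1:ℝ) ∈ Set.Icc (x^2*d) d := ⟨ha1, hb1.le⟩
        have hphi1 : phi8 1 = 1 := by unfold phi8; norm_num
        by_cases hBB : (A + w + B)/3 ≤ Bhat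
        · -- a ≤ astar
          have haa : x^2*d ≤ 3*x^2/(1+x+x^2) := by
            rw [← ha_eq, ← hastar]
            exact div_le_div_of_nonneg_left hA.le hBstar hBB
          apply div_bound8 (by positivity) (Set.left_mem_Icc.2 hab) h1mem
          · rw [hphi1]; norm_num
          · rw [hphi1, mul_one]
            calc phi8 (x^2*d) ≤ phi8 (3*x^2/(1+x+x^2)) :=
                  phi8_mono (by positivity) haa hastar1
              _ = V := hphia
        · -- b ≥ bstar
          push_neg at hBB
          have hbb : 3/(1+x+x^2) ≤ d := by
            rw [← hbstar, ← hb_eq]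
            exact div_le_div_of_nonneg_left hB.le hBhat hBB.le
          apply div_bound8 (by positivity) (Set.right_mem_Icc.2 hab) h1mem
          · rw [hphi1]; norm_num
          · rw [hphi1, mul_one]
            calc phi8 d ≤ phi8 (3/(1+x+x^2)) := phi8_anti hbstar1 hbb hb3.le
              _ = V := hphib
      · -- 1 < a ≤ b < 3 : case III
        push_neg at ha1
        apply div_bound8 (by positivity) (Set.right_mem_Icc.2 hab) (Set.left_mem_Icc.2 hab)
        · unfold phi8
          have hlt3 : x^2*d < 3 := by nlinarith
          have h0 : (0:ℝ) < x^2*d := by positivity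
          have : (0:ℝ) < 3/2 - x^2*d/2 := by linarith
          positivity
        · exact caseIII_ineq8 x d hx0 hx1 ha1.le hb3.le
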